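/- arXiv:2208.06330 — 3 statements merged into one kernel-verified Lean document; each statement's English description precedes it below -/
import Mathlib

section
/- Let G be a topological group and let A and B be compact subsets of G with B a neighborhood of the identity e. Then for every k ∈ ℕ there exists a finite subset S of G such that for all n ∈ ℕ with n ≥ 1, B^{k+n-1}A ⊆ BⁿS. -/
/-! Cover the compact set `B ^ k * A` by finitely many right translates `B * s` of the
neighbourhood `B` of `1`; then `B ^ (m + k) * A = B ^ m * (B ^ k * A) ⊆ B ^ (m + 1) * S`. -/

open Pointwise Topology Set

theorem IsCompact.pow {M : Type*} [Monoid M] [TopologicalSpace M] [ContinuousMul M]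
    {s : Set M} (hs : IsCompact s) : ∀ n : ℕ, IsCompact (s ^ n)
  | 0 => by simpa only [pow_zero, ← singleton_one] using isCompact_singleton
  | n + 1 => by simpa only [pow_succ] using (hs.pow n).mul hs

theorem IsCompact.exists_finset_subset_mul {G : Type*} [Group G] [TopologicalSpace G]
    [IsTopologicalGroup G] {K V : Set G} (hK : IsCompact K) (hV : V ∈ 𝓝 1) :
    ∃ S : Finset G, K ⊆ V * S := by
  obtain ⟨S, -, hS⟩ := hK.elim_nhds_subcover (fun c => interior V * {c}) fun c _ =>
    isOpen_interior.mul_right.mem_nhds ⟨1, mem_interior_iff_mem_nhds.2 hV, c, rfl, one_mul c⟩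
  exact ⟨S, hS.trans <| iUnion₂_subset fun c hc =>
    mul_subset_mul interior_subset (singleton_subset_iff.2 hc)⟩

theorem Set.pow_add_mul_subset_pow_succ_mul {M : Type*} [Monoid M] {s a t : Set M} {k : ℕ}
    (h : s ^ k * a ⊆ s * t) (m : ℕ) : s ^ (m + k) * a ⊆ s ^ (m + 1) * t := by
  rw [pow_add, mul_assoc, pow_succ, mul_assoc]
  exact mul_subset_mul_left h

theorem finite_right_covering
    {G : Type*} [Group G] [TopologicalSpace G] [IsTopologicalGroup G]
    (A B : Set G) (hA : IsCompact A) (hB : IsCompact B) (hBnhd : B ∈ 𝓝 (1 : G))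
    (k : ℕ) :
    ∃ S : Finset G, ∀ n : ℕ, 1 ≤ n → B ^ (k + n - 1) * A ⊆ B ^ n * (S : Set G) := by
  obtain ⟨S, hS⟩ := ((hB.pow k).mul hA).exists_finset_subset_mul hBnhd
  refine ⟨S, fun n hn => ?_⟩
  obtain ⟨m, rfl⟩ := Nat.exists_eq_add_of_le' hn
  rw [show k + (m + 1) - 1 = m + k by omega]
  exact pow_add_mul_subset_pow_succ_mul hS m
end

section
/- Let G be a locally compact Hausdorff unimodular group, and let A₁, A₂, B be compact neighborhoods of the identity e in G. Then there exist constants c₁, c₂ > 0 such that for all n ≥ 3, for every maximal A₁-separated net N₁ of Bⁿ and every maximal A₂-separated net N₂ of B^{n-2}, one has c₁ ≤ |N₂|/|N₁| ≤ c₂. -/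
/-!
The translates `n • A`, `n ∈ N`, of a separated net are disjoint, while maximality makes the
translates `n • (A / A)` cover the ambient set. Hence, for nets `N` and `N'` with `N` covered
by `⋃ m ∈ N', m • W`, comparing left Haar measures gives `|N| μ(A) ≤ |N'| μ(W * A)`. Applied
with `N₂ ⊆ Bⁿ⁻² ⊆ Bⁿ` covered by `N₁` and with `N₁ ⊆ Bⁿ = Bⁿ⁻² * B²` covered by `N₂`, this bounds
`|N₂| / |N₁|` on both sides by ratios of measures of compact neighbourhoods of `1`.
-/

open MeasureTheory Pointwise Topology
open scoped ENNReal NNReal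

/-- `N` is an `A`-separated net of `B`: a finite subset of `B` such that the translates
`n • A`, `n ∈ N`, are pairwise disjoint. -/
def IsSepNet {G : Type*} [Group G] (A B N : Set G) : Prop :=
  N.Finite ∧ N ⊆ B ∧ ∀ n₁ ∈ N, ∀ n₂ ∈ N, (n₁ • A ∩ n₂ • A).Nonempty → n₁ = n₂

/-- `N` is a maximal `A`-separated net of `B`. -/
def IsMaxSepNet {G : Type*} [Group G] (A B N : Set G) : Prop :=
  IsSepNet A B N ∧ ∀ N' : Set G, IsSepNet A B N' → N ⊆ N' → N = N'

section Nets

variable {G : Type*} [Group G] {A C N : Set G}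

lemma IsMaxSepNet.nonempty (h : IsMaxSepNet A C N) (hC : C.Nonempty) : N.Nonempty := by
  rw [Set.nonempty_iff_ne_empty]
  rintro rfl
  obtain ⟨c, hc⟩ := hC
  have hsep : IsSepNet A C {c} :=
    ⟨Set.finite_singleton c, Set.singleton_subset_iff.2 hc, by rintro _ rfl _ rfl _; rfl⟩
  exact Set.singleton_ne_empty c (h.2 {c} hsep (Set.empty_subset _)).symm

lemma IsSepNet.insert {b : G} (h : IsSepNet A C N) (hb : b ∈ C)
    (hdisj : ∀ n ∈ N, ¬ (b • A ∩ n • A).Nonempty) : IsSepNet A C (insert b N) := by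
  refine ⟨h.1.insert b, Set.insert_subset hb h.2.1, ?_⟩
  rintro n₁ (rfl | hn₁) n₂ (rfl | hn₂) hne
  · rfl
  · exact absurd hne (hdisj _ hn₂)
  · exact absurd (Set.inter_comm _ _ ▸ hne) (hdisj _ hn₁)
  · exact h.2.2 _ hn₁ _ hn₂ hne

lemma mem_smul_div_of_smul_inter_nonempty {b n : G} (h : (b • A ∩ n • A).Nonempty) :
    b ∈ n • (A / A) := by
  obtain ⟨x, ⟨a₁, ha₁, rfl⟩, ⟨a₂, ha₂, hx⟩⟩ := h
  refine ⟨a₂ / a₁, Set.div_mem_div ha₂ ha₁, ?_⟩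
  simp only [smul_eq_mul] at hx ⊢
  rw [mul_div_assoc', hx, mul_div_cancel_right]

lemma IsMaxSepNet.subset_iUnion_smul (h : IsMaxSepNet A C N) (hA : A.Nonempty) :
    C ⊆ ⋃ n ∈ N, n • (A / A) := by
  intro b hb
  by_contra hcov
  have hdisj : ∀ n ∈ N, ¬ (b • A ∩ n • A).Nonempty := fun n hn hne =>
    hcov (Set.mem_biUnion hn (mem_smul_div_of_smul_inter_nonempty hne))
  have hbN : b ∉ N := fun hbN => hdisj b hbN (by simpa using hA)
  exact hbN ((h.2 _ (h.1.insert hb hdisj) (Set.subset_insert b N)).symm ▸ Set.mem_insert b N)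

end Nets

lemma Set.mul_subset_iUnion_smul_mul {G : Type*} [Semigroup G] {C D W N : Set G}
    (hC : C ⊆ ⋃ m ∈ N, m • W) : C * D ⊆ ⋃ m ∈ N, m • (W * D) := by
  rintro _ ⟨c, hc, d, hd, rfl⟩
  obtain ⟨m, hm, w, hw, rfl⟩ := Set.mem_iUnion₂.1 (hC hc)
  exact Set.mem_biUnion hm ⟨w * d, Set.mul_mem_mul hw hd, (mul_assoc m w d).symm⟩

section Measure

variable {G : Type*} [Group G] [MeasurableSpace G]
  (μ : Measure G) [μ.IsMulLeftInvariant]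

lemma measure_biUnion_smul_le {N : Set G} (hN : N.Finite) (S : Set G) :
    μ (⋃ m ∈ N, m • S) ≤ N.ncard * μ S := by
  lift N to Finset G using hN
  simpa [measure_smul, Set.ncard_coe_finset] using
    measure_biUnion_finset_le (μ := μ) N (fun m => m • S)

lemma IsSepNet.measure_biUnion_smul [MeasurableMul G] {A C N : Set G} (h : IsSepNet A C N)
    (hA : MeasurableSet A) : μ (⋃ n ∈ N, n • A) = N.ncard * μ A := by
  obtain ⟨hfin, -, hsep⟩ := h
  lift N to Finset G using hfin
  rw [Finset.set_biUnion_coe, measure_biUnion_finset]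
  · simp [measure_smul, Set.ncard_coe_finset]
  · exact fun n₁ hn₁ n₂ hn₂ hne => Set.disjoint_left.2 fun x hx₁ hx₂ =>
      hne (hsep _ hn₁ _ hn₂ ⟨x, hx₁, hx₂⟩)
  · exact fun n _ => hA.const_smul n

lemma IsSepNet.ncard_mul_measure_le [MeasurableMul G] {A C N N' W : Set G} (h : IsSepNet A C N)
    (hA : MeasurableSet A) (hN' : N'.Finite) (hcov : N ⊆ ⋃ m ∈ N', m • W) :
    N.ncard * μ A ≤ N'.ncard * μ (W * A) := by
  rw [← h.measure_biUnion_smul μ hA]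
  refine (measure_mono ?_).trans (measure_biUnion_smul_le μ hN' (W * A))
  simpa [Set.iUnion_smul_set] using Set.mul_subset_iUnion_smul_mul (D := A) hcov

lemma IsSepNet.ncard_mul_toReal_le [MeasurableMul G] {A C N N' W : Set G} (h : IsSepNet A C N)
    (hA : MeasurableSet A) (hN' : N'.Finite) (hcov : N ⊆ ⋃ m ∈ N', m • W)
    (hWA : μ (W * A) ≠ ∞) :
    (N.ncard : ℝ) * (μ A).toReal ≤ N'.ncard * (μ (W * A)).toReal := by
  simpa [ENNReal.toReal_mul] using ENNReal.toReal_mono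
    (ENNReal.mul_ne_top (ENNReal.natCast_ne_top _) hWA) (h.ncard_mul_measure_le μ hA hN' hcov)

end Measure

lemma IsCompact.div {G : Type*} [TopologicalSpace G] [Div G] [ContinuousDiv G] {s t : Set G}
    (hs : IsCompact s) (ht : IsCompact t) : IsCompact (s / t) := by
  rw [← Set.image_div_prod]
  exact (hs.prod ht).image continuous_div'

lemma IsCompact.toReal_measure_pos {X : Type*} [TopologicalSpace X] [MeasurableSpace X]
    (μ : Measure X) [μ.IsOpenPosMeasure] [IsFiniteMeasureOnCompacts μ] {K : Set X}
    (hK : IsCompact K) {x : X} (hKx : K ∈ 𝓝 x) : 0 < (μ K).toReal :=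
  ENNReal.toReal_pos (μ.measure_pos_of_mem_nhds hKx).ne' hK.measure_lt_top.ne

theorem maximal_nets_cardinality_comparison_general
    {G : Type*} [Group G] [TopologicalSpace G] [IsTopologicalGroup G]
    [T2Space G] [MeasurableSpace G] [BorelSpace G]
    (μG : Measure G) [μG.IsHaarMeasure]
    (A₁ A₂ B : Set G)
    (hA₁ : IsCompact A₁) (hA₁nhd : A₁ ∈ 𝓝 (1 : G))
    (hA₂ : IsCompact A₂) (hA₂nhd : A₂ ∈ 𝓝 (1 : G))
    (hB : IsCompact B) (hBnhd : B ∈ 𝓝 (1 : G)) :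
    ∃ c₁ c₂ : ℝ, 0 < c₁ ∧ 0 < c₂ ∧
      ∀ n : ℕ, 3 ≤ n → ∀ N₁ N₂ : Set G,
        IsMaxSepNet A₁ (B ^ n) N₁ → IsMaxSepNet A₂ (B ^ (n - 2)) N₂ →
          c₁ ≤ (N₂.ncard : ℝ) / (N₁.ncard : ℝ) ∧ (N₂.ncard : ℝ) / (N₁.ncard : ℝ) ≤ c₂ := by
  have hB1 : (1 : G) ∈ B := mem_of_mem_nhds hBnhd
  have hA₁ne := Filter.nonempty_of_mem hA₁nhd
  have hA₂ne := Filter.nonempty_of_mem hA₂nhd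
  have hX : IsCompact (A₁ / A₁ * A₂) := (hA₁.div hA₁).mul hA₂
  have hZ : IsCompact (A₂ / A₂ * B ^ 2 * A₁) :=
    ((hA₂.div hA₂).mul (by simpa only [sq] using hB.mul hB)).mul hA₁
  have hXnhd : A₁ / A₁ * A₂ ∈ 𝓝 (1 : G) :=
    Filter.mem_of_superset hA₂nhd (Set.subset_mul_right _ hA₁ne.one_mem_div)
  have hZnhd : A₂ / A₂ * B ^ 2 * A₁ ∈ 𝓝 (1 : G) :=
    Filter.mem_of_superset hA₁nhd (Set.subset_mul_right _ (by
      simpa using Set.mul_mem_mul hA₂ne.one_mem_div (Set.one_mem_pow (n := 2) hB1)))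
  have hZpos := hZ.toReal_measure_pos μG hZnhd
  have hA₂pos := hA₂.toReal_measure_pos μG hA₂nhd
  refine ⟨_, _, div_pos (hA₁.toReal_measure_pos μG hA₁nhd) hZpos,
    div_pos (hX.toReal_measure_pos μG hXnhd) hA₂pos, fun n hn N₁ N₂ hN₁ hN₂ => ?_⟩
  have hN₁pos : (0 : ℝ) < N₁.ncard := mod_cast
    (Set.ncard_pos hN₁.1.1).2 (hN₁.nonempty ⟨1, Set.one_mem_pow hB1⟩)
  have hpow : B ^ n = B ^ (n - 2) * B ^ 2 := by rw [← pow_add, Nat.sub_add_cancel (by omega)]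
  have upper := hN₂.1.ncard_mul_toReal_le μG hA₂.measurableSet hN₁.1.1
    ((hN₂.1.2.1.trans (Set.pow_subset_pow_right hB1 (Nat.sub_le n 2))).trans
      (hN₁.subset_iUnion_smul hA₁ne)) hX.measure_lt_top.ne
  have lower := hN₁.1.ncard_mul_toReal_le μG hA₁.measurableSet hN₂.1.1
    (hN₁.1.2.1.trans (hpow ▸ Set.mul_subset_iUnion_smul_mul (hN₂.subset_iUnion_smul hA₂ne)))
    hZ.measure_lt_top.ne
  constructor
  · rw [div_le_div_iff₀ hZpos hN₁pos]
    linarith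
  · rw [div_le_div_iff₀ hN₁pos hA₂pos]
    linarith

theorem maximal_nets_cardinality_comparison
    {G : Type*} [Group G] [TopologicalSpace G] [IsTopologicalGroup G]
    [LocallyCompactSpace G] [T2Space G] [MeasurableSpace G] [BorelSpace G]
    -- `G` is unimodular: a left Haar measure `μG` which is also right invariant
    (μG : Measure G) [μG.IsHaarMeasure] [μG.IsMulRightInvariant]
    (A₁ A₂ B : Set G)
    (hA₁ : IsCompact A₁) (hA₁nhd : A₁ ∈ 𝓝 (1 : G))
    (hA₂ : IsCompact A₂) (hA₂nhd : A₂ ∈ 𝓝 (1 : G))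
    (hB : IsCompact B) (hBnhd : B ∈ 𝓝 (1 : G)) :
    ∃ c₁ c₂ : ℝ, 0 < c₁ ∧ 0 < c₂ ∧
      ∀ n : ℕ, 3 ≤ n → ∀ N₁ N₂ : Set G,
        IsMaxSepNet A₁ (B ^ n) N₁ → IsMaxSepNet A₂ (B ^ (n - 2)) N₂ →
          c₁ ≤ (N₂.ncard : ℝ) / (N₁.ncard : ℝ) ∧ (N₂.ncard : ℝ) / (N₁.ncard : ℝ) ≤ c₂ :=
  maximal_nets_cardinality_comparison_general μG A₁ A₂ B hA₁ hA₁nhd hA₂ hA₂nhd hB hBnhd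
end

section
/- Let G be a topological group, X a Hausdorff topological space, and G ↷ X a continuous action (i.e., the map G × X → X is continuous). Let x₀ ∈ X, let K be a compact subset of G, and let U be a neighborhood of the identity e in G. Then there exists a neighborhood V of x₀ in X such that for every g ∈ K \ Stab_G(x₀)U, gV ∩ V = ∅. -/
/-!
Points of `K` outside the open set `Stab_G(x₀) * interior U` form a compact set `C`, none of
whose elements fixes `x₀`.
For each `g ∈ C`, Hausdorff separation of `g • x₀` from `x₀` and continuity of the action at
`(g, x₀)` give a neighbourhood `W` of `g` and `V` of `x₀` with `h • V` disjoint from `V` for all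
`h ∈ W`; compactness of `C` lets finitely many such `V` be intersected.
-/

open Pointwise Topology Filter Set

section SeparatedNeighborhoods

variable {G X : Type*} [TopologicalSpace G] [TopologicalSpace X] [T2Space X] [SMul G X]
  [ContinuousSMul G X]

theorem exists_nhds_disjoint_smul_of_smul_ne {g : G} {x : X} (hgx : g • x ≠ x) :
    ∃ W ∈ 𝓝 g, ∃ V ∈ 𝓝 x, ∀ h ∈ W, Disjoint (h • V) V := by
  obtain ⟨A, hA, B, hB, hAB⟩ := Filter.disjoint_iff.1 (disjoint_nhds_nhds.2 hgx)
  have hpre : (fun p : G × X => p.1 • p.2) ⁻¹' A ∈ 𝓝 g ×ˢ 𝓝 x := by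
    rw [← nhds_prod_eq]
    exact continuous_smul.continuousAt hA
  obtain ⟨W, hW, V, hV, hWV⟩ := mem_prod_iff.1 hpre
  refine ⟨W, hW, V ∩ B, inter_mem hV hB, fun h hh => ?_⟩
  rw [Set.disjoint_left]
  rintro _ ⟨y, hy, rfl⟩ hhy
  exact Set.disjoint_left.1 hAB (hWV (mk_mem_prod hh hy.1)) hhy.2

theorem IsCompact.exists_nhds_disjoint_smul {C : Set G} (hC : IsCompact C) {x : X}
    (hCx : ∀ g ∈ C, g • x ≠ x) : ∃ V ∈ 𝓝 x, ∀ g ∈ C, Disjoint (g • V) V := by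
  refine hC.induction_on ⟨univ, univ_mem, by simp⟩ ?_ ?_ ?_
  · rintro s t hst ⟨V, hV, hVt⟩
    exact ⟨V, hV, fun g hg => hVt g (hst hg)⟩
  · rintro s t ⟨V, hV, hVs⟩ ⟨V', hV', hV't⟩
    refine ⟨V ∩ V', inter_mem hV hV', ?_⟩
    rintro g (hg | hg)
    · exact ((hVs g hg).mono (smul_set_mono inter_subset_left)) inter_subset_left
    · exact ((hV't g hg).mono (smul_set_mono inter_subset_right)) inter_subset_right
  · intro g hg
    obtain ⟨W, hW, V, hV, hWV⟩ := exists_nhds_disjoint_smul_of_smul_ne (hCx g hg)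
    exact ⟨W, mem_nhdsWithin_of_mem_nhds hW, V, hV, hWV⟩

end SeparatedNeighborhoods

theorem far_returns_avoid_neighborhood
    {G X : Type*} [Group G] [TopologicalSpace G] [IsTopologicalGroup G]
    [TopologicalSpace X] [T2Space X] [MulAction G X]
    (hcont : Continuous fun p : G × X => p.1 • p.2)
    (x₀ : X) (K : Set G) (hK : IsCompact K) (U : Set G) (hU : U ∈ 𝓝 (1 : G)) :
    ∃ V ∈ 𝓝 x₀, ∀ g ∈ K \ (((MulAction.stabilizer G x₀ : Subgroup G) : Set G) * U),
      (g • V) ∩ V = ∅ := by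
  have : ContinuousSMul G X := ⟨hcont⟩
  set H : Set G := ((MulAction.stabilizer G x₀ : Subgroup G) : Set G)
  have hC : IsCompact (K \ (H * interior U)) := hK.diff isOpen_interior.mul_left
  have hCx : ∀ g ∈ K \ (H * interior U), g • x₀ ≠ x₀ := fun g hg hgx =>
    hg.2 ⟨g, hgx, 1, mem_interior_iff_mem_nhds.2 hU, mul_one g⟩
  obtain ⟨V, hV, hVC⟩ := hC.exists_nhds_disjoint_smul hCx
  refine ⟨V, hV, fun g hg => Set.disjoint_iff_inter_eq_empty.1 (hVC g ?_)⟩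
  exact ⟨hg.1, fun hgS => hg.2 (mul_subset_mul_left interior_subset hgS)⟩
end
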